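/- arXiv:1306.4006 — 4 statements merged into one kernel-verified Lean document; each statement's English description precedes it below -/
import Mathlib

section
/- Let F be a field and L a 3-dimensional Lie algebra over F that is perfect, i.e. [L, L] = L. Then L is a simple Lie algebra. -/
/-!
The derived algebra of a Lie algebra of dimension `n` is spanned by the brackets `⁅bᵢ, bⱼ⁆`,
`i < j`, of a basis, so it has dimension at most `n.choose 2`; hence a nontrivial perfect Lie
algebra has dimension at least `3`. A proper nonzero ideal `I` of `L` would make `L ⧸ I` a
nontrivial perfect Lie algebra of dimension at most `2`. Non-abelianness is immediate, since
an abelian Lie algebra has trivial derived algebra.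
-/

open Module LieAlgebra

def LieIdeal.mkLieHom {R L : Type*} [CommRing R] [LieRing L] [LieAlgebra R L]
    (I : LieIdeal R L) : L →ₗ⁅R⁆ L ⧸ I :=
  { (LieSubmodule.Quotient.mk' I : L →ₗ[R] L ⧸ I) with map_lie' := rfl }

section

variable {R L L' : Type*} [CommRing R] [LieRing L] [LieAlgebra R L] [LieRing L'] [LieAlgebra R L']

theorem LieAlgebra.derivedSeries_one_eq_top_of_surjective {f : L →ₗ⁅R⁆ L'}
    (hf : Function.Surjective f) (h : derivedSeries R L 1 = ⊤) : derivedSeries R L' 1 = ⊤ := by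
  rw [← LieIdeal.derivedSeries_map_eq 1 hf, h, ← LieHom.idealRange_eq_map]
  exact f.idealRange_eq_top_of_surjective hf

theorem LieIdeal.derivedSeries_quotient_one_eq_top {I : LieIdeal R L}
    (h : derivedSeries R L 1 = ⊤) : derivedSeries R (L ⧸ I) 1 = ⊤ :=
  derivedSeries_one_eq_top_of_surjective (f := I.mkLieHom)
    (LieSubmodule.Quotient.surjective_mk' I) h

end

section

variable {K L : Type*} [Field K] [LieRing L] [LieAlgebra K L] [FiniteDimensional K L]

theorem LieAlgebra.finrank_derivedSeries_one_le_choose_two :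
    finrank K (derivedSeries K L 1).toSubmodule ≤ (finrank K L).choose 2 := by
  classical
  set b := finBasis K L
  set S : Finset L :=
    ({p | p.1 < p.2} : Finset (Fin (finrank K L) × Fin (finrank K L))).image
      fun p ↦ ⁅b p.1, b p.2⁆
  have hb : ∀ i j, ⁅b i, b j⁆ ∈ Submodule.span K (S : Set L) := by
    intro i j
    rcases lt_trichotomy i j with hij | rfl | hji
    · exact Submodule.subset_span (Finset.mem_image.2 ⟨(i, j), by simpa using hij, rfl⟩)
    · simp
    · rw [← lie_skew]
      exact neg_mem <|
        Submodule.subset_span (Finset.mem_image.2 ⟨(j, i), by simpa using hji, rfl⟩)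
  have hle : (derivedSeries K L 1).toSubmodule ≤ Submodule.span K (S : Set L) := by
    rw [derivedSeries_def, derivedSeriesOfIdeal_succ, derivedSeriesOfIdeal_zero,
      LieSubmodule.lieIdeal_oper_eq_linear_span', Submodule.span_le]
    rintro - ⟨x, -, y, -, rfl⟩
    rw [← b.sum_repr x, ← b.sum_repr y, sum_lie]
    refine Submodule.sum_mem _ fun i _ ↦ ?_
    rw [lie_sum]
    refine Submodule.sum_mem _ fun j _ ↦ ?_
    rw [smul_lie, lie_smul]
    exact Submodule.smul_mem _ _ (Submodule.smul_mem _ _ (hb i j))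
  calc finrank K (derivedSeries K L 1).toSubmodule
      ≤ finrank K (Submodule.span K (S : Set L)) := Submodule.finrank_mono hle
    _ ≤ S.card := finrank_span_finset_le_card S
    _ ≤ _ := Finset.card_image_le.trans (by simp [Fintype.card_product_filter_lt])

theorem LieAlgebra.three_le_finrank_of_derivedSeries_one_eq_top [Nontrivial L]
    (h : derivedSeries K L 1 = ⊤) : 3 ≤ finrank K L := by
  have hle := finrank_derivedSeries_one_le_choose_two (K := K) (L := L)
  rw [h, LieSubmodule.top_toSubmodule, finrank_top, Nat.choose_two_right] at hle
  have hpos : 0 < finrank K L := finrank_pos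
  by_contra! hlt
  interval_cases finrank K L <;> omega

end

theorem stmt6 (F : Type*) [Field F] (L : Type*) [LieRing L] [LieAlgebra F L]
    [FiniteDimensional F L] (hdim : Module.finrank F L = 3)
    (hperf : LieAlgebra.derivedSeries F L 1 = ⊤) :
    LieAlgebra.IsSimple F L := by
  have : Nontrivial L := (finrank_pos_iff (R := F)).1 (by omega)
  refine ⟨fun I ↦ ?_, fun _ ↦ (derivedSeries_lt_top_of_solvable F L).ne hperf⟩
  by_contra! hI
  have : Nontrivial (L ⧸ I) :=
    Submodule.Quotient.nontrivial_iff.2 <| by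
      simpa only [ne_eq, LieSubmodule.toSubmodule_eq_top] using hI.2
  have hquot := three_le_finrank_of_derivedSeries_one_eq_top
    (LieIdeal.derivedSeries_quotient_one_eq_top (I := I) hperf)
  have hIpos : 0 < finrank F I.toSubmodule :=
    finrank_pos_iff.2 ((LieSubmodule.nontrivial_iff_ne_bot ..).2 hI.1)
  have hsum : finrank F (L ⧸ I) + finrank F I.toSubmodule = 3 :=
    hdim ▸ Submodule.finrank_quotient_add_finrank I.toSubmodule
  omega
end

section
/- Let F ⊆ K be a field extension and let L be a perfect 3-dimensional Lie algebra over F. Then the base change K ⊗_F L is a 3-dimensional perfect Lie algebra over K, and hence a simple Lie algebra over K. -/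
/-!
Base change along `F ⊆ K` preserves the dimension and, since derived series commute with base
change, perfectness. A perfect Lie algebra of dimension at most two is zero: if `a, b` span it,
its derived algebra lies in the line through `⁅a, b⁆`, and a Lie algebra of dimension at most one
is abelian. A proper nonzero ideal `I` of a perfect three-dimensional Lie algebra would give a
perfect quotient of dimension one or two, so such an algebra is simple.
-/

open scoped TensorProduct

open Module LieAlgebra

section Perfect

variable {R L : Type*} [CommRing R] [LieRing L] [LieAlgebra R L]

lemma LieAlgebra.derivedSeries_one_eq_bot [IsLieAbelian L] : derivedSeries R L 1 = ⊥ := by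
  rw [derivedSeries_def, derivedSeriesOfIdeal_succ, LieSubmodule.lie_eq_bot_iff]
  exact fun x _ y _ ↦ trivial_lie_zero L L x y

lemma LieAlgebra.not_isLieAbelian_of_derivedSeries_one_eq_top [Nontrivial L]
    (hp : derivedSeries R L 1 = ⊤) : ¬ IsLieAbelian L :=
  fun _ ↦ bot_ne_top (derivedSeries_one_eq_bot.symm.trans hp)

def LieIdeal.quotientMk (I : LieIdeal R L) : L →ₗ⁅R⁆ L ⧸ I :=
  { I.toSubmodule.mkQ with map_lie' := fun {_ _} ↦ rfl }

lemma LieIdeal.quotientMk_surjective (I : LieIdeal R L) : Function.Surjective I.quotientMk :=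
  Submodule.Quotient.mk_surjective _

lemma LieAlgebra.derivedSeries_one_quotient_eq_top (I : LieIdeal R L)
    (hp : derivedSeries R L 1 = ⊤) : derivedSeries R (L ⧸ I) 1 = ⊤ := by
  rw [← LieIdeal.derivedSeries_map_eq 1 I.quotientMk_surjective, hp,
    ← LieHom.idealRange_eq_map, LieHom.idealRange_eq_top_of_surjective _ I.quotientMk_surjective]

end Perfect

section LowDimension

variable {k L : Type*} [Field k] [LieRing L] [LieAlgebra k L]

lemma LieAlgebra.derivedSeries_one_le_span_lie {a b : L}
    (h : Submodule.span k {a, b} = ⊤) :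
    (derivedSeries k L 1).toSubmodule ≤ Submodule.span k {⁅a, b⁆} := by
  rw [derivedSeries_def, derivedSeriesOfIdeal_succ, derivedSeriesOfIdeal_zero,
    LieSubmodule.lieIdeal_oper_eq_linear_span', Submodule.span_le]
  rintro _ ⟨u, -, v, -, rfl⟩
  obtain ⟨c, d, rfl⟩ := Submodule.mem_span_pair.mp (h ▸ Submodule.mem_top : u ∈ _)
  obtain ⟨e, f, rfl⟩ := Submodule.mem_span_pair.mp (h ▸ Submodule.mem_top : v ∈ _)
  refine Submodule.mem_span_singleton.mpr ⟨c * f - d * e, ?_⟩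
  simp only [lie_add, add_lie, lie_smul, smul_lie, lie_self, ← lie_skew b a]
  module

lemma LieAlgebra.isLieAbelian_of_finrank_le_one [FiniteDimensional k L]
    (h : finrank k L ≤ 1) : IsLieAbelian L := by
  obtain ⟨v, hv⟩ := finrank_le_one_iff.mp h
  refine ⟨fun x y ↦ ?_⟩
  obtain ⟨c, rfl⟩ := hv x
  obtain ⟨d, rfl⟩ := hv y
  simp

lemma LieAlgebra.finrank_derivedSeries_one_le_one [FiniteDimensional k L]
    (h : finrank k L ≤ 2) : finrank k (derivedSeries k L 1).toSubmodule ≤ 1 := by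
  rcases h.lt_or_eq with h | h
  · exact (Submodule.finrank_le _).trans (by omega)
  · let b := finBasisOfFinrankEq k L h
    have hb : Submodule.span k {b 0, b 1} = ⊤ := by
      rw [← b.span_eq]; congr; ext; simp [Fin.exists_fin_two, eq_comm]
    calc _ ≤ finrank k (Submodule.span k {⁅b 0, b 1⁆}) :=
          Submodule.finrank_mono (derivedSeries_one_le_span_lie hb)
      _ ≤ 1 := by simpa using finrank_span_le_card ({⁅b 0, b 1⁆} : Set L)

lemma LieAlgebra.subsingleton_of_derivedSeries_one_eq_top_of_finrank_le_two
    [FiniteDimensional k L] (h : finrank k L ≤ 2) (hp : derivedSeries k L 1 = ⊤) :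
    Subsingleton L := by
  have h1 := finrank_derivedSeries_one_le_one h
  rw [hp, LieSubmodule.top_toSubmodule, finrank_top] at h1
  have := isLieAbelian_of_finrank_le_one h1
  exact (subsingleton_or_nontrivial L).resolve_right
    fun _ ↦ not_isLieAbelian_of_derivedSeries_one_eq_top hp this

lemma LieAlgebra.isSimple_of_derivedSeries_one_eq_top_of_finrank_eq_three
    [FiniteDimensional k L] (h : finrank k L = 3) (hp : derivedSeries k L 1 = ⊤) :
    IsSimple k L := by
  have : Nontrivial L := nontrivial_of_finrank_pos (R := k) (by omega)
  refine ⟨fun I ↦ or_iff_not_imp_left.mpr fun hI ↦ ?_,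
    not_isLieAbelian_of_derivedSeries_one_eq_top hp⟩
  have : Nontrivial I := (LieSubmodule.nontrivial_iff_ne_bot k L L).mpr hI
  have hdim : finrank k (L ⧸ I) + finrank k I = finrank k L :=
    Submodule.finrank_quotient_add_finrank I.toSubmodule
  have : Subsingleton (L ⧸ I) :=
    subsingleton_of_derivedSeries_one_eq_top_of_finrank_le_two
      (by have := finrank_pos (R := k) (M := I); omega) (derivedSeries_one_quotient_eq_top I hp)
  exact (LieSubmodule.toSubmodule_eq_top I).mp (Submodule.Quotient.subsingleton_iff.mp this)

end LowDimension

theorem stmt7 (F K : Type*) [Field F] [Field K] [Algebra F K]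
    (L : Type*) [LieRing L] [LieAlgebra F L]
    [FiniteDimensional F L] (hdim : Module.finrank F L = 3)
    (hperf : LieAlgebra.derivedSeries F L 1 = ⊤) :
    Module.finrank K (K ⊗[F] L) = 3 ∧
    LieAlgebra.derivedSeries K (K ⊗[F] L) 1 = ⊤ ∧
    LieAlgebra.IsSimple K (K ⊗[F] L) := by
  have hdim' : finrank K (K ⊗[F] L) = 3 := by rw [finrank_baseChange, hdim]
  have hperf' : derivedSeries K (K ⊗[F] L) 1 = ⊤ := by
    rw [derivedSeries_baseChange, hperf, LieSubmodule.baseChange_top]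
  exact ⟨hdim', hperf', isSimple_of_derivedSeries_one_eq_top_of_finrank_eq_three hdim' hperf'⟩
end

section
/- Let F be a field, V a 4-dimensional F-vector space, and f a non-degenerate symmetric bilinear form on V; if char F = 2 assume further that f is not alternating. Let L(f) be the Lie algebra of endomorphisms of V skew-adjoint with respect to f. Then the derived subalgebra [L(f), L(f)] equals L(f) if and only if char F ≠ 2. -/
/-! For symmetric `B` and skew-adjoint `x, y` one has `B (⁅x, y⁆ v) v = 0`, so this quadratic
condition holds on the whole derived algebra. In characteristic `2` the identity is skew-adjoint,
and it violates the condition as soon as `B` is not alternating.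

In characteristic `≠ 2` the maps `a ∧ b : v ↦ B a v • b - B b v • a` span the skew-adjoint
algebra: `2 • x = ∑ B (x eᵢ) eⱼ • (eᵢ* ∧ eⱼ*)` for a basis `e` with `B`-dual basis `e*`. If the
`eₖ` are anisotropic (an orthogonal basis), then `⁅eᵢ* ∧ eₖ, eₖ ∧ eⱼ*⁆ = -B eₖ eₖ • (eᵢ* ∧ eⱼ*)`
for every `k ∉ {i, j}`, and such a `k` exists once `dim V ≥ 3`. -/

open LieAlgebra Module

theorem LieAlgebra.lie_mem_derivedSeries_one {R L : Type*} [CommRing R] [LieRing L]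
    [LieAlgebra R L] (x y : L) : ⁅x, y⁆ ∈ derivedSeries R L 1 := by
  rw [derivedSeries_def, derivedSeriesOfIdeal_succ, derivedSeriesOfIdeal_zero]
  exact LieSubmodule.lie_mem_lie (LieSubmodule.mem_top x) (LieSubmodule.mem_top y)

namespace LinearMap.BilinForm

section CommRing

variable {R M : Type*} [CommRing R] [AddCommGroup M] [Module R M] (B : LinearMap.BilinForm R M)

def wedge : M →ₗ[R] M →ₗ[R] Module.End R M :=
  LinearMap.mk₂ R
    (fun a b => toSpanSingleton R M b ∘ₗ B a - toSpanSingleton R M a ∘ₗ B b)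
    (fun _ _ _ => by ext; simp; module)
    (fun _ _ _ => by ext; simp; module)
    (fun _ _ _ => by ext; simp; module)
    (fun _ _ _ => by ext; simp; module)

theorem wedge_apply (a b v : M) : B.wedge a b v = B a v • b - B b v • a := rfl

variable {B}

theorem mem_skewAdjointLieSubalgebra {x : Module.End R M} :
    x ∈ skewAdjointLieSubalgebra B ↔ B.IsSkewAdjoint x :=
  B.mem_skewAdjointSubmodule x

theorem isSkewAdjoint_wedge (hB : B.IsSymm) (a b : M) : B.IsSkewAdjoint (B.wedge a b) := by
  intro u w
  simp only [Pi.neg_apply, wedge_apply, map_neg, map_sub, map_smul, LinearMap.sub_apply,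
    LinearMap.smul_apply, smul_eq_mul]
  rw [hB.eq u a, hB.eq u b]
  ring

def skewWedge (hB : B.IsSymm) (a b : M) : skewAdjointLieSubalgebra B :=
  ⟨B.wedge a b, mem_skewAdjointLieSubalgebra.mpr (isSkewAdjoint_wedge hB a b)⟩

@[simp]
theorem coe_skewWedge (hB : B.IsSymm) (a b : M) :
    (skewWedge hB a b : Module.End R M) = B.wedge a b :=
  rfl

theorem lie_wedge_wedge (hB : B.IsSymm) {a b c : M} (hac : B a c = 0) (hcb : B c b = 0) :
    ⁅B.wedge a c, B.wedge c b⁆ = -B c c • B.wedge a b := by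
  have hca : B c a = 0 := by rw [hB.eq, hac]
  have hbc : B b c = 0 := by rw [hB.eq, hcb]
  ext v
  simp only [Ring.lie_def, LinearMap.sub_apply, Module.End.mul_apply, wedge_apply, map_sub,
    map_smul, LinearMap.smul_apply, hac, hcb, hca, hbc, hB.eq b a]
  module

theorem one_mem_skewAdjointLieSubalgebra (h2 : (2 : R) = 0) :
    1 ∈ skewAdjointLieSubalgebra B := by
  rw [mem_skewAdjointLieSubalgebra]
  intro u w
  simp [eq_neg_iff_add_eq_zero, ← two_mul, h2]

theorem apply_lie_self_eq_zero (hB : B.IsSymm) {x y : Module.End R M}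
    (hx : B.IsSkewAdjoint x) (hy : B.IsSkewAdjoint y) (v : M) : B (⁅x, y⁆ v) v = 0 := by
  have hxy : B (x (y v)) v = -B (y v) (x v) := by simpa using hx (y v) v
  have hyx : B (y (x v)) v = -B (x v) (y v) := by simpa using hy (x v) v
  rw [Ring.lie_def, LinearMap.sub_apply, map_sub, LinearMap.sub_apply, Module.End.mul_apply,
    Module.End.mul_apply, hxy, hyx, hB.eq (x v), sub_self]

theorem apply_self_eq_zero_of_mem_derivedSeries (hB : B.IsSymm) {x : skewAdjointLieSubalgebra B}
    (hx : x ∈ derivedSeries R (skewAdjointLieSubalgebra B) 1) (v : M) :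
    B ((x : Module.End R M) v) v = 0 := by
  replace hx : x ∈ Submodule.span R
      {⁅y, z⁆ | (y : skewAdjointLieSubalgebra B) (z : skewAdjointLieSubalgebra B)} := by
    rwa [← coe_derivedSeries_one_eq]
  induction hx using Submodule.span_induction with
  | mem _ hx =>
    obtain ⟨y, z, rfl⟩ := hx
    exact apply_lie_self_eq_zero hB (mem_skewAdjointLieSubalgebra.mp y.2)
      (mem_skewAdjointLieSubalgebra.mp z.2) v
  | zero => simp
  | add y z _ _ hy hz => simp [hy, hz]
  | smul c y _ hy => simp [hy]

theorem derivedSeries_skewAdjointLieSubalgebra_ne_top (hB : B.IsSymm) (h2 : (2 : R) = 0)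
    (hB' : ¬B.IsAlt) : derivedSeries R (skewAdjointLieSubalgebra B) 1 ≠ ⊤ := by
  intro h
  refine hB' fun v => ?_
  simpa using apply_self_eq_zero_of_mem_derivedSeries hB
    (x := ⟨1, one_mem_skewAdjointLieSubalgebra h2⟩) (h ▸ LieSubmodule.mem_top _) v

end CommRing

section Field

variable {F V : Type*} [Field F] [AddCommGroup V] [Module F V] {B : LinearMap.BilinForm F V}
  {ι : Type*} [Fintype ι] [DecidableEq ι]

theorem basis_repr_eq_apply_dualBasis (hB : B.IsSymm) (hnd : B.Nondegenerate) (b : Basis ι F V)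
    (v : V) (i : ι) : b.repr v i = B (B.dualBasis hnd b i) v := by
  conv_lhs => rw [← B.dualBasis_dualBasis hnd hB b]
  rw [dualBasis_repr_apply, hB.eq]

theorem two_smul_eq_sum_wedge_dualBasis (hB : B.IsSymm) (hnd : B.Nondegenerate)
    (b : Basis ι F V) {x : Module.End F V} (hx : B.IsSkewAdjoint x) :
    (2 : F) • x =
      ∑ i, ∑ j, B (x (b i)) (b j) • B.wedge (B.dualBasis hnd b i) (B.dualBasis hnd b j) := by
  set b' := B.dualBasis hnd b
  have hx_expand : ∀ v, ∑ i, B (b' i) v • x (b i) = x v := fun v => by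
    conv_rhs => rw [← b.sum_repr v]
    simp [basis_repr_eq_apply_dualBasis hB hnd, b']
  have hx_dual : ∀ v, ∑ i, B (x (b i)) v • b' i = -x v := fun v => by
    conv_rhs => rw [← b'.sum_repr (x v)]
    simp only [b', dualBasis_repr_apply, ← Finset.sum_neg_distrib, ← neg_smul]
    refine Finset.sum_congr rfl fun i _ => ?_
    rw [hx, hB.eq (b i), Pi.neg_apply, map_neg, LinearMap.neg_apply]
  have h_sum : (2 : F) • x = ∑ i, B.wedge (b' i) (x (b i)) := by
    ext v
    simp only [LinearMap.smul_apply, LinearMap.sum_apply, wedge_apply, Finset.sum_sub_distrib,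
      hx_expand, hx_dual]
    module
  rw [h_sum]
  refine Finset.sum_congr rfl fun i _ => ?_
  conv_lhs => rw [← b'.sum_repr (x (b i))]
  simp [b', dualBasis_repr_apply]

theorem skewWedge_mem_derivedSeries (hB : B.IsSymm) {a b c : V} (hac : B a c = 0)
    (hcb : B c b = 0) (hc : B c c ≠ 0) :
    skewWedge hB a b ∈ derivedSeries F (skewAdjointLieSubalgebra B) 1 := by
  have h : skewWedge hB a b = (-B c c)⁻¹ • ⁅skewWedge hB a c, skewWedge hB c b⁆ := by
    ext1
    change B.wedge a b = (-B c c)⁻¹ • ⁅B.wedge a c, B.wedge c b⁆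
    rw [lie_wedge_wedge hB hac hcb, smul_smul, inv_mul_cancel₀ (neg_ne_zero.mpr hc), one_smul]
  rw [h]
  exact (derivedSeries F _ 1).smul_mem _ (lie_mem_derivedSeries_one _ _)

theorem derivedSeries_skewAdjointLieSubalgebra_eq_top_of_basis (hB : B.IsSymm)
    (hnd : B.Nondegenerate) (h2 : (2 : F) ≠ 0) (e : Basis ι F V) (he : ∀ k, B (e k) (e k) ≠ 0)
    (hι : 3 ≤ Fintype.card ι) : derivedSeries F (skewAdjointLieSubalgebra B) 1 = ⊤ := by
  set e' := B.dualBasis hnd e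
  have hwedge : ∀ i j, skewWedge hB (e' i) (e' j) ∈ derivedSeries F _ 1 := by
    intro i j
    obtain ⟨k, hki, hkj⟩ := ENat.exists_ne_ne_of_three_le (by simpa using hι) i j
    exact skewWedge_mem_derivedSeries hB (by rw [apply_dualBasis_left, if_neg hki])
      (by rw [hB.eq, apply_dualBasis_left, if_neg hkj]) (he k)
  rw [eq_top_iff]
  rintro x -
  have hx : x = (2 : F)⁻¹ •
      ∑ i, ∑ j, B ((x : Module.End F V) (e i)) (e j) • skewWedge hB (e' i) (e' j) := by
    ext1
    push_cast
    simp only [coe_skewWedge, e']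
    rw [← two_smul_eq_sum_wedge_dualBasis hB hnd e (mem_skewAdjointLieSubalgebra.mp x.2),
      smul_smul, inv_mul_cancel₀ h2, one_smul]
  rw [hx]
  exact Submodule.smul_mem _ _ <| Submodule.sum_mem _ fun i _ => Submodule.sum_mem _ fun j _ =>
    Submodule.smul_mem _ _ (hwedge i j)

theorem derivedSeries_skewAdjointLieSubalgebra_eq_top (hB : B.IsSymm) (hnd : B.Nondegenerate)
    (h2 : (2 : F) ≠ 0) (hV : 3 ≤ finrank F V) :
    derivedSeries F (skewAdjointLieSubalgebra B) 1 = ⊤ := by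
  have : FiniteDimensional F V := Module.finite_of_finrank_pos (by omega)
  have : Invertible (2 : F) := invertibleOfNonzero h2
  obtain ⟨e, he⟩ := exists_orthogonal_basis (isSymm_iff.mp hB)
  exact derivedSeries_skewAdjointLieSubalgebra_eq_top_of_basis hB hnd h2 e
    (iIsOrtho.not_isOrtho_basis_self_of_nondegenerate he hnd) (by simpa using hV)

end Field

end LinearMap.BilinForm

theorem stmt9_general (F : Type*) [Field F] (V : Type*) [AddCommGroup V] [Module F V]
    (hV : Module.finrank F V = 4)
    (f : LinearMap.BilinForm F V) (hsymm : f.IsSymm) (hnd : f.Nondegenerate)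
    (halt : ringChar F = 2 → ¬ f.IsAlt) :
    LieAlgebra.derivedSeries F (skewAdjointLieSubalgebra f) 1 = ⊤ ↔
      ringChar F ≠ 2 :=
  ⟨fun h hchar => LinearMap.BilinForm.derivedSeries_skewAdjointLieSubalgebra_ne_top hsymm
      (@CharTwo.two_eq_zero F _ (ringChar.of_eq hchar)) (halt hchar) h,
    fun hchar => LinearMap.BilinForm.derivedSeries_skewAdjointLieSubalgebra_eq_top hsymm hnd
      (Ring.two_ne_zero hchar) (by omega)⟩

theorem stmt9 (F : Type*) [Field F] (V : Type*) [AddCommGroup V] [Module F V]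
    [FiniteDimensional F V] (hV : Module.finrank F V = 4)
    (f : LinearMap.BilinForm F V) (hsymm : f.IsSymm) (hnd : f.Nondegenerate)
    (halt : ringChar F = 2 → ¬ f.IsAlt) :
    LieAlgebra.derivedSeries F (skewAdjointLieSubalgebra f) 1 = ⊤ ↔
      ringChar F ≠ 2 :=
  stmt9_general F V hV f hsymm hnd halt
end

section
/- Let F be a field of prime characteristic p, let s ∈ F be an element that is not a p-th power in F, and let K = F[X]/(X^p - s), which is a field extension of F. Let L be a Lie algebra over F that is absolutely simple, i.e. K' ⊗_F L is a simple Lie algebra over K' for every field extension K' of F. Then P = K ⊗_F L is a simple Lie algebra over K (and hence over F), but the base change K ⊗_F P is not a semisimple Lie algebra over K; indeed its solvable radical is nonzero. -/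
/-!
Write `P = K ⊗_F L` and view it as a Lie algebra over `F`. Simplicity of `P` over `F`: for an
`F`-ideal `I` of `P`, the `K`-subspace `{y | K y ⊆ I}` is a `K`-ideal squeezed between
`⁅P, I⁆` and `I`, so simplicity over `K` and triviality of the centre force `I = 0` or `I = P`.

Non-semisimplicity of `K ⊗_F P`: multiplication by `t` is an element `τ` of the centroid of `P`
(over `F`), so `D = t ⊗ 1 - 1 ⊗ τ` lies in the centroid of `K ⊗_F P`. By Frobenius
`D ^ p = t ^ p ⊗ 1 - 1 ⊗ τ ^ p = s - s = 0`, and `D ≠ 0` because `t ∉ F`. If `E` is the last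
nonzero power of `D`, then `⁅E x, E y⁆ = E² ⁅x, y⁆ = 0`, so the image of `E` is a nonzero
abelian ideal.
-/

open scoped TensorProduct

universe u v

lemma algebraMap_sub_pow_char {K A : Type*} [CommRing K] [Ring A] [Algebra K A] (p : ℕ)
    [Fact p.Prime] [CharP K p] (t : K) (a : A) :
    (algebraMap K A t - a) ^ p = algebraMap K A (t ^ p) - a ^ p := by
  simpa using congrArg (Polynomial.aeval a) (sub_pow_char (Polynomial.C t) Polynomial.X)

namespace LieAlgebra

variable (R L : Type*) [CommRing R] [LieRing L] [LieAlgebra R L]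

def centroid : Subalgebra R (Module.End R L) :=
  Subalgebra.centralizer R (Set.range (ad R L))

variable {R L} {D : Module.End R L}

lemma mem_centroid_iff : D ∈ centroid R L ↔ ∀ x y : L, ⁅x, D y⁆ = D ⁅x, y⁆ := by
  simp only [centroid, Subalgebra.mem_centralizer_iff, Set.forall_mem_range, LinearMap.ext_iff,
    Module.End.mul_apply, ad_apply]

lemma lie_apply_apply_of_mem_centroid (hD : D ∈ centroid R L) (x y : L) :
    ⁅D x, D y⁆ = (D * D) ⁅x, y⁆ := by
  rw [mem_centroid_iff] at hD
  rw [hD, ← lie_skew, hD, ← map_neg, lie_skew, Module.End.mul_apply]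

def rangeIdeal (hD : D ∈ centroid R L) : LieIdeal R L :=
  { LinearMap.range D with
    lie_mem := by
      rintro x _ ⟨y, rfl⟩
      exact ⟨⁅x, y⁆, (mem_centroid_iff.mp hD x y).symm⟩ }

lemma isLieAbelian_rangeIdeal (hD : D ∈ centroid R L) (hD2 : D * D = 0) :
    IsLieAbelian (rangeIdeal hD) := by
  refine ⟨fun ⟨_, x, hx⟩ ⟨_, y, hy⟩ => ?_⟩
  ext
  simp [← hx, ← hy, lie_apply_apply_of_mem_centroid hD, hD2]

lemma rangeIdeal_ne_bot (hD : D ∈ centroid R L) (hD0 : D ≠ 0) : rangeIdeal hD ≠ ⊥ := by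
  contrapose! hD0
  ext x
  simpa using (LieSubmodule.eq_bot_iff _).mp hD0 (D x) ⟨x, rfl⟩

theorem not_hasTrivialRadical_of_isNilpotent_mem_centroid (hD : D ∈ centroid R L)
    (hnil : IsNilpotent D) (hD0 : D ≠ 0) : ¬ HasTrivialRadical R L := by
  have : Nontrivial (Module.End R L) := ⟨⟨D, 0, hD0⟩⟩
  have hn0 : nilpotencyClass D ≠ 0 := (pos_nilpotencyClass_iff.mpr hnil).ne'
  have hn1 : nilpotencyClass D ≠ 1 := mt nilpotencyClass_eq_one.mp hD0
  set E := D ^ (nilpotencyClass D - 1)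
  have hE2 : E * E = 0 := by
    rw [← pow_add]
    exact pow_eq_zero_of_le (by omega) (pow_nilpotencyClass hnil)
  rw [hasTrivialRadical_iff_no_abelian_ideals, not_forall]
  exact ⟨rangeIdeal (pow_mem hD _), fun h => rangeIdeal_ne_bot _ (pow_pred_nilpotencyClass hnil)
    (h (isLieAbelian_rangeIdeal _ hE2))⟩

lemma baseChange_mem_centroid {A M : Type*} [CommRing A] [Algebra R A] [LieRing M]
    [LieAlgebra R M] {τ : Module.End R M} (hτ : τ ∈ centroid R M) :
    τ.baseChange A ∈ centroid A (A ⊗[R] M) := by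
  rw [mem_centroid_iff] at hτ ⊢
  intro x y
  induction x using TensorProduct.induction_on with
  | zero => simp
  | add x₁ x₂ h₁ h₂ => simp only [add_lie, h₁, h₂, map_add]
  | tmul a m =>
    induction y using TensorProduct.induction_on with
    | zero => simp
    | add y₁ y₂ h₁ h₂ => simp only [lie_add, h₁, h₂, map_add]
    | tmul b n => simp [ExtendScalars.bracket_tmul, hτ]

lemma lsmul_mem_centroid {F K N : Type*} [CommRing F] [CommRing K] [Algebra F K] [LieRing N]
    [LieAlgebra K N] (t : K) :
    RestrictScalars.lsmul F K N t ∈ centroid F (RestrictScalars F K N) :=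
  mem_centroid_iff.mpr fun x y =>
    lie_smul t (RestrictScalars.addEquiv F K N x) (RestrictScalars.addEquiv F K N y)

theorem not_hasTrivialRadical_baseChange {F K M : Type*} [Field F] [CommRing K] [Algebra F K]
    (p : ℕ) [Fact p.Prime] [CharP K p] {s : F} {t : K} (ht : t ^ p = algebraMap F K s)
    (htF : t ∉ Set.range (algebraMap F K)) [LieRing M] [LieAlgebra F M] [Nontrivial M]
    {τ : Module.End F M} (hτ : τ ∈ centroid F M) (hτp : τ ^ p = algebraMap F _ s) :
    ¬ HasTrivialRadical K (K ⊗[F] M) := by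
  set D : Module.End K (K ⊗[F] M) := algebraMap K _ t - τ.baseChange K
  have hD : D ∈ centroid K (K ⊗[F] M) :=
    sub_mem (Subalgebra.algebraMap_mem _ t) (baseChange_mem_centroid hτ)
  have hDp : D ^ p = 0 := by
    rw [algebraMap_sub_pow_char, ← LinearMap.baseChange_pow, hτp, ht, sub_eq_zero,
      ← IsScalarTower.algebraMap_apply]
    exact ((Module.End.baseChangeHom F K M).commutes s).symm
  refine not_hasTrivialRadical_of_isNilpotent_mem_centroid hD ⟨p, hDp⟩ ?_
  obtain ⟨m, hm⟩ := exists_ne (0 : M)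
  have ht1 : t ∉ (1 : Submodule F K) := by rwa [Submodule.one_eq_range]
  obtain ⟨f, hft, hf1⟩ := Submodule.exists_dual_map_eq_bot_of_notMem ht1 inferInstance
  have hf1 : f 1 = 0 := by
    simpa [hf1] using Submodule.mem_map_of_mem (f := f) (Submodule.mem_one.mpr ⟨1, map_one _⟩)
  intro hD0
  -- `f ⊗ id` sends `D (1 ⊗ m) = t ⊗ m - 1 ⊗ τ m` to `f t • m`.
  have := congrArg (TensorProduct.lid F M ∘ f.rTensor M) (LinearMap.congr_fun hD0 (1 ⊗ₜ m))
  simp [D, hf1, TensorProduct.smul_tmul', hft, hm] at this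

end LieAlgebra

namespace LieIdeal

variable {F K N : Type*} [CommRing F] [CommRing K] [Algebra F K] [LieRing N] [LieAlgebra K N]

local notation "ι" => AddEquiv.symm (RestrictScalars.addEquiv F K N)

def scalarCore (I : LieIdeal F (RestrictScalars F K N)) : LieIdeal K N where
  carrier := {y | ∀ k : K, ι (k • y) ∈ I}
  add_mem' hy hz k := by simpa [smul_add] using I.add_mem (hy k) (hz k)
  zero_mem' k := by simp
  smul_mem' c y hy k := by simpa [smul_smul] using hy (k * c)
  lie_mem {x y} hy k := by
    rw [← lie_smul]
    exact I.lie_mem (x := ι x) (hy k)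

variable {I : LieIdeal F (RestrictScalars F K N)}

lemma symm_mem_of_mem_scalarCore {y : N} (hy : y ∈ scalarCore I) : ι y ∈ I := by
  simpa using hy 1

lemma lie_mem_scalarCore (x : N) {y : N} (hy : ι y ∈ I) :
    ⁅x, y⁆ ∈ scalarCore I := fun k => by
  rw [← smul_lie]
  exact I.lie_mem (x := ι (k • x)) hy

end LieIdeal

theorem LieAlgebra.IsSimple.restrictScalars (F K N : Type*) [CommRing F] [CommRing K]
    [Algebra F K] [LieRing N] [LieAlgebra K N] [IsSimple K N] :
    IsSimple F (RestrictScalars F K N) := by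
  refine ⟨fun I => ?_, fun h => IsSimple.non_abelian K (L := N) ⟨h.trivial⟩⟩
  rcases IsSimple.eq_bot_or_eq_top (LieIdeal.scalarCore I) with h | h
  · left
    refine (LieSubmodule.eq_bot_iff I).mpr fun y hy => ?_
    have hcen : RestrictScalars.addEquiv F K N y ∈ center K N := by
      refine (LieModule.mem_maxTrivSubmodule K N N _).mpr fun x => ?_
      simpa [h] using LieIdeal.lie_mem_scalarCore x (y := RestrictScalars.addEquiv F K N y) hy
    simpa [center_eq_bot] using hcen
  · right
    refine eq_top_iff.mpr fun y _ =>
      LieIdeal.symm_mem_of_mem_scalarCore (y := RestrictScalars.addEquiv F K N y) ?_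
    simp [h]

theorem stmt11_general (F : Type u) [Field F] (p : ℕ) (hp : p.Prime) [CharP F p]
    (s : F) (hs : ¬ ∃ y : F, y ^ p = s)
    -- `K` is the field extension `F[X]/(X^p - s)` of `F`: it is generated over `F` by an
    -- element `t` satisfying `t^p = s`
    (K : Type u) [Field K] [Algebra F K] (t : K) (ht : t ^ p = algebraMap F K s)
    (L : Type v) [LieRing L] [LieAlgebra F L]
    (habs : ∀ (K' : Type u) [Field K'] [Algebra F K'],
      LieAlgebra.IsSimple K' (K' ⊗[F] L)) :
    LieAlgebra.IsSimple K (K ⊗[F] L) ∧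
    LieAlgebra.IsSimple F (RestrictScalars F K (K ⊗[F] L)) ∧
    ¬ LieAlgebra.HasTrivialRadical K (@TensorProduct F _ K (RestrictScalars F K (K ⊗[F] L)) _ _ _ LieAlgebra.toModule) ∧
    LieAlgebra.radical K (@TensorProduct F _ K (RestrictScalars F K (K ⊗[F] L)) _ _ _ LieAlgebra.toModule) ≠ ⊥ := by
  have hsimple := habs K
  have : Fact p.Prime := ⟨hp⟩
  have : CharP K p := charP_of_injective_algebraMap' F p
  have : Nontrivial (RestrictScalars F K (K ⊗[F] L)) := hsimple.nontrivial
  have htF : t ∉ Set.range (algebraMap F K) := by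
    rintro ⟨c, rfl⟩
    exact hs ⟨c, (algebraMap F K).injective (by rw [map_pow, ht])⟩
  have hτp : RestrictScalars.lsmul F K (K ⊗[F] L) t ^ p = algebraMap F _ s := by
    rw [← map_pow, ht, AlgHom.commutes]
  have hrad := LieAlgebra.not_hasTrivialRadical_baseChange p ht htF
    (LieAlgebra.lsmul_mem_centroid t) hτp
  exact ⟨hsimple, .restrictScalars F K _, hrad, fun h => hrad ⟨h⟩⟩

theorem stmt11 (F : Type u) [Field F] (p : ℕ) (hp : p.Prime) [CharP F p]
    (s : F) (hs : ¬ ∃ y : F, y ^ p = s)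
    -- `K` is the field extension `F[X]/(X^p - s)` of `F`: it is generated over `F` by an
    -- element `t` satisfying `t^p = s`
    (K : Type u) [Field K] [Algebra F K] (t : K) (ht : t ^ p = algebraMap F K s)
    (hgen : Algebra.adjoin F ({t} : Set K) = ⊤)
    (L : Type v) [LieRing L] [LieAlgebra F L]
    (habs : ∀ (K' : Type u) [Field K'] [Algebra F K'],
      LieAlgebra.IsSimple K' (K' ⊗[F] L)) :
    LieAlgebra.IsSimple K (K ⊗[F] L) ∧
    LieAlgebra.IsSimple F (RestrictScalars F K (K ⊗[F] L)) ∧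
    ¬ LieAlgebra.HasTrivialRadical K (@TensorProduct F _ K (RestrictScalars F K (K ⊗[F] L)) _ _ _ LieAlgebra.toModule) ∧
    LieAlgebra.radical K (@TensorProduct F _ K (RestrictScalars F K (K ⊗[F] L)) _ _ _ LieAlgebra.toModule) ≠ ⊥ :=
  stmt11_general F p hp s hs K t ht L habs
end
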